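/- arXiv:1804.01686 — 2 statements merged into one kernel-verified Lean document; each statement's English description precedes it below -/
import Mathlib

section
/- Let Γ be the ellipse {x²/a² + y²/b² = 1} (a > b > 0) and O = (x₀,y₀) a point strictly inside it. Let A be a point outside the ellipse, l a tangent line to Γ through A with tangency point T, and B the point on l such that the line OB makes the same (reflected) angle with OT as the line OA does, i.e. B is the image of A under reflection of the line OA in the line OT followed by intersection with l. Then G(x,y) = (b²x² + a²y² − a²b²)/((x−x₀)² + (y−y₀)²) satisfies G(A) = G(B). -/
set_option maxHeartbeats 1000000

open scoped RealInnerProductSpace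

/-- The angular billiard for the ellipse `Γ = {x²/a² + y²/b² = 1}` with respect to an
interior point `O = (x₀,y₀)` preserves the rational function
`G(x,y) = (b²x² + a²y² - a²b²)/((x-x₀)² + (y-y₀)²)`:
if `T ∈ Γ`, the points `A`, `B` lie on the tangent line to `Γ` at `T`, `A` lies outside
the ellipse, and `B - O` is a positive multiple of the reflection of `A - O` in the line
through `O` and `T`, then `G(A) = G(B)`. -/
theorem angular_billiard_ellipse_integral (a b x₀ y₀ : ℝ) (hab : a > b) (hb : b > 0)
    (hO : x₀ ^ 2 / a ^ 2 + y₀ ^ 2 / b ^ 2 < 1)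
    (G : ℝ × ℝ → ℝ)
    (hG : ∀ p : ℝ × ℝ, G p = (b ^ 2 * p.1 ^ 2 + a ^ 2 * p.2 ^ 2 - a ^ 2 * b ^ 2) /
        ((p.1 - x₀) ^ 2 + (p.2 - y₀) ^ 2))
    (O A B T : ℝ × ℝ) (hOdef : O = (x₀, y₀))
    (hT : T.1 ^ 2 / a ^ 2 + T.2 ^ 2 / b ^ 2 = 1)
    (hA : A.1 ^ 2 / a ^ 2 + A.2 ^ 2 / b ^ 2 > 1)
    (hAtan : T.1 * A.1 / a ^ 2 + T.2 * A.2 / b ^ 2 = 1)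
    (hBtan : T.1 * B.1 / a ^ 2 + T.2 * B.2 / b ^ 2 = 1)
    (hTO : T ≠ O) (hAO : A ≠ O)
    (hreflect : ∃ lam : ℝ, 0 < lam ∧
      B - O = lam • ((2 * ((A.1 - O.1) * (T.1 - O.1) + (A.2 - O.2) * (T.2 - O.2)) /
          ((T.1 - O.1) ^ 2 + (T.2 - O.2) ^ 2)) • (T - O) - (A - O))) :
    G A = G B := by
  obtain ⟨lam, hlam, hrefl⟩ := hreflect
  subst hOdef
  have ha : (0:ℝ) < a := lt_trans hb hab
  have ha2 : (0:ℝ) < a ^ 2 := by positivity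
  have hb2 : (0:ℝ) < b ^ 2 := by positivity
  have ha0 : a ≠ 0 := ne_of_gt ha
  have hb0 : b ≠ 0 := ne_of_gt hb
  -- cleared forms of hypotheses
  have hT' : b ^ 2 * T.1 ^ 2 + a ^ 2 * T.2 ^ 2 = a ^ 2 * b ^ 2 := by
    field_simp at hT; linarith
  have hAtan' : b ^ 2 * (T.1 * A.1) + a ^ 2 * (T.2 * A.2) = a ^ 2 * b ^ 2 := by
    field_simp at hAtan; linarith
  have hBtan' : b ^ 2 * (T.1 * B.1) + a ^ 2 * (T.2 * B.2) = a ^ 2 * b ^ 2 := by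
    field_simp at hBtan; linarith
  have hO' : b ^ 2 * x₀ ^ 2 + a ^ 2 * y₀ ^ 2 < a ^ 2 * b ^ 2 := by
    rw [div_add_div _ _ (ne_of_gt ha2) (ne_of_gt hb2), div_lt_one (by positivity)] at hO
    linarith
  -- |n|² > 0 where n = (b²T₁, a²T₂)
  have hab2 : b ^ 2 ≤ a ^ 2 := by nlinarith
  have hnn : (0:ℝ) < b ^ 4 * T.1 ^ 2 + a ^ 4 * T.2 ^ 2 := by
    nlinarith [mul_nonneg (mul_nonneg ha2.le (sub_nonneg.mpr hab2)) (sq_nonneg T.2),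
      mul_pos hb2 (mul_pos ha2 hb2), hT']
  have hnn0 : b ^ 4 * T.1 ^ 2 + a ^ 4 * T.2 ^ 2 ≠ 0 := ne_of_gt hnn
  -- |T - O|² > 0
  have hu : (0:ℝ) < (T.1 - x₀) ^ 2 + (T.2 - y₀) ^ 2 := by
    rcases eq_or_ne T.1 x₀ with h1 | h1
    · have h2 : T.2 - y₀ ≠ 0 := by
        intro h2; exact hTO (Prod.ext h1 (by linarith [sub_eq_zero.mp h2]))
      positivity
    · have h1' : T.1 - x₀ ≠ 0 := sub_ne_zero.mpr h1
      positivity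
  have hu0 : (T.1 - x₀) ^ 2 + (T.2 - y₀) ^ 2 ≠ 0 := ne_of_gt hu
  -- |A - O|² > 0
  have hq : (0:ℝ) < (A.1 - x₀) ^ 2 + (A.2 - y₀) ^ 2 := by
    rcases eq_or_ne A.1 x₀ with h1 | h1
    · have h2 : A.2 - y₀ ≠ 0 := by
        intro h2; exact hAO (Prod.ext h1 (by linarith [sub_eq_zero.mp h2]))
      positivity
    · have h1' : A.1 - x₀ ≠ 0 := sub_ne_zero.mpr h1
      positivity
  -- parametrize A on tangent line
  set sA : ℝ := (b ^ 2 * T.1 * (A.2 - T.2) - a ^ 2 * T.2 * (A.1 - T.1)) /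
      (b ^ 4 * T.1 ^ 2 + a ^ 4 * T.2 ^ 2) with hsA
  have hA1 : A.1 = T.1 - sA * (a ^ 2 * T.2) := by
    rw [hsA, div_mul_eq_mul_div, sub_div' hnn0, eq_div_iff hnn0]
    linear_combination (b ^ 2 * T.1) * (hAtan' - hT')
  have hA2 : A.2 = T.2 + sA * (b ^ 2 * T.1) := by
    rw [hsA, div_mul_eq_mul_div, add_div' _ _ _ hnn0, eq_div_iff hnn0]
    linear_combination (a ^ 2 * T.2) * (hAtan' - hT')
  set sB : ℝ := (b ^ 2 * T.1 * (B.2 - T.2) - a ^ 2 * T.2 * (B.1 - T.1)) /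
      (b ^ 4 * T.1 ^ 2 + a ^ 4 * T.2 ^ 2) with hsB
  have hB1 : B.1 = T.1 - sB * (a ^ 2 * T.2) := by
    rw [hsB, div_mul_eq_mul_div, sub_div' hnn0, eq_div_iff hnn0]
    linear_combination (b ^ 2 * T.1) * (hBtan' - hT')
  have hB2 : B.2 = T.2 + sB * (b ^ 2 * T.1) := by
    rw [hsB, div_mul_eq_mul_div, add_div' _ _ _ hnn0, eq_div_iff hnn0]
    linear_combination (a ^ 2 * T.2) * (hBtan' - hT')
  -- components of the reflection hypothesis
  have hr1 : B.1 - x₀ = lam * ((2 * ((A.1 - x₀) * (T.1 - x₀) + (A.2 - y₀) * (T.2 - y₀)) /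
      ((T.1 - x₀) ^ 2 + (T.2 - y₀) ^ 2)) * (T.1 - x₀) - (A.1 - x₀)) := by
    have := congrArg Prod.fst hrefl
    simpa using this
  have hr2 : B.2 - y₀ = lam * ((2 * ((A.1 - x₀) * (T.1 - x₀) + (A.2 - y₀) * (T.2 - y₀)) /
      ((T.1 - x₀) ^ 2 + (T.2 - y₀) ^ 2)) * (T.2 - y₀) - (A.2 - y₀)) := by
    have := congrArg Prod.snd hrefl
    simpa using this
  -- |B-O|² = lam² |A-O|²
  have hBO : (B.1 - x₀) ^ 2 + (B.2 - y₀) ^ 2 = lam ^ 2 * ((A.1 - x₀) ^ 2 + (A.2 - y₀) ^ 2) := by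
    rw [hr1, hr2]; field_simp; ring
  -- cr = cross(v, T-O) is nonzero
  set cr : ℝ := b ^ 2 * T.1 * x₀ + a ^ 2 * T.2 * y₀ - a ^ 2 * b ^ 2 with hcrdef
  have hcr : cr < 0 := by
    rw [hcrdef]
    nlinarith [sq_nonneg (b * (x₀ - T.1)), sq_nonneg (a * (y₀ - T.2))]
  have hcr0 : cr ≠ 0 := ne_of_lt hcr
  -- cross products
  have hcA : (A.1 - x₀) * (T.2 - y₀) - (A.2 - y₀) * (T.1 - x₀) = sA * cr := by
    rw [hcrdef, hA1, hA2]
    linear_combination (-sA) * hT'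
  have hcB : (B.1 - x₀) * (T.2 - y₀) - (B.2 - y₀) * (T.1 - x₀) = sB * cr := by
    rw [hcrdef, hB1, hB2]
    linear_combination (-sB) * hT'
  have hcB' : (B.1 - x₀) * (T.2 - y₀) - (B.2 - y₀) * (T.1 - x₀) =
      -lam * ((A.1 - x₀) * (T.2 - y₀) - (A.2 - y₀) * (T.1 - x₀)) := by
    rw [hr1, hr2]; field_simp; ring
  have hsBA : sB = -lam * sA := by
    have h := hcB.symm.trans (hcB'.trans (by rw [hcA]))
    have h2 : sB * cr = (-lam * sA) * cr := by linear_combination h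
    exact mul_right_cancel₀ hcr0 h2
  -- numerators
  have hFA : b ^ 2 * A.1 ^ 2 + a ^ 2 * A.2 ^ 2 - a ^ 2 * b ^ 2 = sA ^ 2 * (a ^ 4 * b ^ 4) := by
    rw [hA1, hA2]
    linear_combination (1 + sA ^ 2 * a ^ 2 * b ^ 2) * hT'
  have hFB : b ^ 2 * B.1 ^ 2 + a ^ 2 * B.2 ^ 2 - a ^ 2 * b ^ 2 = sB ^ 2 * (a ^ 4 * b ^ 4) := by
    rw [hB1, hB2]
    linear_combination (1 + sB ^ 2 * a ^ 2 * b ^ 2) * hT'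
  -- conclude
  have hBq : (0:ℝ) < (B.1 - x₀) ^ 2 + (B.2 - y₀) ^ 2 := by
    rw [hBO]; positivity
  rw [hG A, hG B, hFA, hFB, hBO, hsBA]
  rw [div_eq_div_iff (ne_of_gt hq) (by positivity)]
  ring
end

section
/- Suppose u: ℝ → ℝ is a positive C¹ function and ρ: ℝ → ℝ is C¹ with 0 < ρ(s) < r, satisfying the linear ODE d/ds(u·(1/(r−ρ) − 1/r)) − ((r−ρ)³/(r+ρ)³)·d/ds(u·((r+ρ)³/(r−ρ)³)·(1/(r+ρ) − 1/r)) = 0. Then the quantity u(s)·ρ(s)(r+ρ(s))²/(r−ρ(s)) is constant in s. -/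
/-- Equation (19) of the paper.  If `u > 0` is `C¹`, `ρ` is `C¹` with `0 < ρ < r`, and
`d/ds(u·(1/(r-ρ) - 1/r)) - ((r-ρ)³/(r+ρ)³)·d/ds(u·((r+ρ)³/(r-ρ)³)·(1/(r+ρ) - 1/r)) = 0`,
then `u·ρ·(r+ρ)²/(r-ρ)` is constant. -/
theorem ode_integrating_factor_solution (r : ℝ) (hr : 0 < r)
    (u ρ : ℝ → ℝ) (hu : ContDiff ℝ 1 u) (hρ : ContDiff ℝ 1 ρ)
    (hupos : ∀ s, 0 < u s) (hρr : ∀ s, 0 < ρ s ∧ ρ s < r)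
    (hode : ∀ s : ℝ,
      deriv (fun t => u t * (1 / (r - ρ t) - 1 / r)) s -
        ((r - ρ s) ^ 3 / (r + ρ s) ^ 3) *
          deriv (fun t => u t * ((r + ρ t) ^ 3 / (r - ρ t) ^ 3) *
            (1 / (r + ρ t) - 1 / r)) s = 0) :
    ∃ C : ℝ, ∀ s : ℝ, u s * ρ s * (r + ρ s) ^ 2 / (r - ρ s) = C := by
  set F : ℝ → ℝ := fun t => u t * ρ t * (r + ρ t) ^ 2 / (r - ρ t) with hF
  have key : ∀ s : ℝ, HasDerivAt F 0 s := by
    intro s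
    obtain ⟨h0, h1⟩ := hρr s
    have ha : r - ρ s ≠ 0 := by linarith
    have hb : r + ρ s ≠ 0 := by positivity
    have hr' : (r : ℝ) ≠ 0 := hr.ne'
    have hU : HasDerivAt u (deriv u s) s := (hu.differentiable one_ne_zero s).hasDerivAt
    have hP : HasDerivAt ρ (deriv ρ s) s := (hρ.differentiable one_ne_zero s).hasDerivAt
    set U := deriv u s with hUdef
    set P := deriv ρ s with hPdef
    have hA : HasDerivAt (fun t => r - ρ t) (-P) s := hP.const_sub r
    have hB : HasDerivAt (fun t => r + ρ t) P s := hP.const_add r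
    -- derivative of the first function in the ODE
    have hinvA : HasDerivAt (fun t => (r - ρ t)⁻¹) (-(-P) / (r - ρ s) ^ 2) s := hA.inv ha
    have hf1 : HasDerivAt (fun t => u t * (1 / (r - ρ t) - 1 / r))
        (U * ((r - ρ s)⁻¹ - r⁻¹) + u s * (-(-P) / (r - ρ s) ^ 2)) s := by
      simpa [one_div] using hU.fun_mul (hinvA.sub_const r⁻¹)
    -- derivative of the second function in the ODE
    have hB3 : HasDerivAt (fun t => (r + ρ t) ^ 3) (3 * (r + ρ s) ^ 2 * P) s := by
      simpa using hB.fun_pow 3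
    have hA3 : HasDerivAt (fun t => (r - ρ t) ^ 3) (3 * (r - ρ s) ^ 2 * -P) s := by
      simpa using hA.fun_pow 3
    have hq : HasDerivAt (fun t => (r + ρ t) ^ 3 / (r - ρ t) ^ 3)
        ((3 * (r + ρ s) ^ 2 * P * (r - ρ s) ^ 3 -
          (r + ρ s) ^ 3 * (3 * (r - ρ s) ^ 2 * -P)) / ((r - ρ s) ^ 3) ^ 2) s :=
      hB3.div hA3 (pow_ne_zero 3 ha)
    have hinvB : HasDerivAt (fun t => (r + ρ t)⁻¹) (-P / (r + ρ s) ^ 2) s := hB.inv hb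
    have hf2 : HasDerivAt
        (fun t => u t * ((r + ρ t) ^ 3 / (r - ρ t) ^ 3) * (1 / (r + ρ t) - 1 / r))
        ((U * ((r + ρ s) ^ 3 / (r - ρ s) ^ 3) +
            u s * ((3 * (r + ρ s) ^ 2 * P * (r - ρ s) ^ 3 -
              (r + ρ s) ^ 3 * (3 * (r - ρ s) ^ 2 * -P)) / ((r - ρ s) ^ 3) ^ 2)) *
            ((r + ρ s)⁻¹ - r⁻¹) +
          u s * ((r + ρ s) ^ 3 / (r - ρ s) ^ 3) * (-P / (r + ρ s) ^ 2)) s := by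
      simpa [one_div] using (hU.fun_mul hq).fun_mul (hinvB.sub_const r⁻¹)
    -- derivative of F (raw form)
    have hFd : HasDerivAt F
        (((((U * ρ s + u s * P) * (r + ρ s) ^ 2 +
            u s * ρ s * (2 * (r + ρ s) ^ 1 * P)) * (r - ρ s) -
          u s * ρ s * (r + ρ s) ^ 2 * (-P)) / (r - ρ s) ^ 2)) s := by
      have := ((hU.fun_mul hP).fun_mul (hB.fun_pow 2)).fun_div hA ha
      exact this.congr_deriv (by push_cast; ring)
    -- rewrite the ODE at s using the computed derivatives
    have hode' := hode s
    rw [hf1.deriv, hf2.deriv] at hode'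
    have hzero :
        ((((U * ρ s + u s * P) * (r + ρ s) ^ 2 +
            u s * ρ s * (2 * (r + ρ s) ^ 1 * P)) * (r - ρ s) -
          u s * ρ s * (r + ρ s) ^ 2 * (-P)) / (r - ρ s) ^ 2) = 0 := by
      have hfac :
          ((((U * ρ s + u s * P) * (r + ρ s) ^ 2 +
              u s * ρ s * (2 * (r + ρ s) ^ 1 * P)) * (r - ρ s) -
            u s * ρ s * (r + ρ s) ^ 2 * (-P)) / (r - ρ s) ^ 2) =
          (r + ρ s) ^ 3 / 2 *
            ((U * ((r - ρ s)⁻¹ - r⁻¹) + u s * (-(-P) / (r - ρ s) ^ 2)) -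
              ((r - ρ s) ^ 3 / (r + ρ s) ^ 3) *
                ((U * ((r + ρ s) ^ 3 / (r - ρ s) ^ 3) +
                    u s * ((3 * (r + ρ s) ^ 2 * P * (r - ρ s) ^ 3 -
                      (r + ρ s) ^ 3 * (3 * (r - ρ s) ^ 2 * -P)) / ((r - ρ s) ^ 3) ^ 2)) *
                    ((r + ρ s)⁻¹ - r⁻¹) +
                  u s * ((r + ρ s) ^ 3 / (r - ρ s) ^ 3) * (-P / (r + ρ s) ^ 2))) := by
        field_simp
        ring
      rw [hfac, hode', mul_zero]
    exact hzero ▸ hFd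
  have hdiff : Differentiable ℝ F := fun s => (key s).differentiableAt
  have hderiv : ∀ s, deriv F s = 0 := fun s => (key s).deriv
  exact ⟨F 0, fun s => is_const_of_deriv_eq_zero hdiff hderiv s 0⟩
end
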